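/- Let p be a prime and r ≥ 0, let T be the discrete p-torus of rank r, and let G be a finite group of automorphisms of T (a finite subgroup of AddAut T). Let ℓ be the p-adic valuation of the order of G. Then either the fixed-point subgroup C_T(G) = {x ∈ T : α(x) = x for all α ∈ G} is infinite, or p^ℓ · x = 0 for every x ∈ C_T(G). -/

import Mathlib

/-!
Averaging over `G` maps `T` into the fixed-point subgroup `C`. If `C` is finite of order `k`
and `x ∈ C`, write `x = k • y` using divisibility of `T`; then
`|G| • x = ∑_{α ∈ G} α x = k • ∑_{α ∈ G} α y = 0`, because `∑_{α ∈ G} α y ∈ C` is killed by `k`.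
As `x` has `p`-power order, `|G| • x = 0` already gives `p ^ v_p(|G|) • x = 0`.
-/

/-- The image of the `p`-adic integers in `ℚ_[p]`, as an additive subgroup. -/
noncomputable def padicIntAddSubgroup (p : ℕ) [Fact p.Prime] : AddSubgroup ℚ_[p] :=
  (PadicInt.Coe.ringHom (p := p)).toAddMonoidHom.range

/-- The Prüfer `p`-group `ℤ(p^∞)`, realized as `ℚ_[p] ⧸ ℤ_[p]`. -/
abbrev ZpInfty (p : ℕ) [Fact p.Prime] : Type :=
  ℚ_[p] ⧸ padicIntAddSubgroup p

/-- The discrete `p`-torus of rank `r`. -/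
abbrev DiscretePTorus (p : ℕ) [Fact p.Prime] (r : ℕ) : Type :=
  Fin r → ZpInfty p

theorem pow_factorization_nsmul_eq_zero {A : Type*} [AddMonoid A] {p n N : ℕ} (hp : p.Prime)
    {x : A} (hpx : p ^ n • x = 0) (hN : N • x = 0) (hN0 : N ≠ 0) :
    p ^ N.factorization p • x = 0 := by
  obtain ⟨k, -, hk⟩ := (Nat.dvd_prime_pow hp).1 (addOrderOf_dvd_of_nsmul_eq_zero hpx)
  have hkN : p ^ k ∣ N := hk ▸ addOrderOf_dvd_of_nsmul_eq_zero hN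
  rw [← addOrderOf_dvd_iff_nsmul_eq_zero, hk]
  exact pow_dvd_pow p ((hp.pow_dvd_iff_le_factorization hN0).1 hkN)

namespace AddAut

variable {T : Type*} [AddCommGroup T]

def fixedPoints (G : AddSubgroup (AddAut T)) : AddSubgroup T where
  carrier := {x | ∀ α ∈ G, α x = x}
  zero_mem' α _ := map_zero α
  add_mem' {a b} ha hb α hα := by rw [map_add, ha α hα, hb α hα]
  neg_mem' {a} ha α hα := by rw [map_neg, ha α hα]

theorem mem_fixedPoints {G : AddSubgroup (AddAut T)} {x : T} :
    x ∈ fixedPoints G ↔ ∀ α ∈ G, α x = x :=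
  Iff.rfl

def average (G : AddSubgroup (AddAut T)) [Fintype G] : T →+ T :=
  ∑ α : G, ((α : AddAut T) : T →+ T)

variable {G : AddSubgroup (AddAut T)} [Fintype G]

theorem average_apply (t : T) : average G t = ∑ α : G, (α : AddAut T) t :=
  AddMonoidHom.finsetSum_apply _ _ _

theorem average_mem_fixedPoints (t : T) : average G t ∈ fixedPoints G := by
  intro β hβ
  rw [average_apply, map_sum]
  -- the additive structure of `AddAut T` is composition, so `β (α t) = (β + α) t`
  exact Equiv.sum_comp (Equiv.addLeft (⟨β, hβ⟩ : G)) fun α => (α : AddAut T) t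

theorem average_of_mem_fixedPoints {x : T} (hx : x ∈ fixedPoints G) :
    average G x = Nat.card G • x := by
  rw [average_apply, Finset.sum_congr rfl fun α _ => hx α.1 α.2, Finset.sum_const,
    Finset.card_univ, Nat.card_eq_fintype_card]

theorem card_nsmul_eq_zero_of_mem_fixedPoints [DivisibleBy T ℕ] [Finite (fixedPoints G)]
    {x : T} (hx : x ∈ fixedPoints G) : Nat.card G • x = 0 := by
  set k := Nat.card (fixedPoints G)
  have hx_div : k • DivisibleBy.div x k = x := DivisibleBy.div_cancel x Nat.card_pos.ne'
  have hk : k • average G (DivisibleBy.div x k) = 0 :=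
    congrArg Subtype.val
      (card_nsmul_eq_zero' (x := ⟨_, average_mem_fixedPoints (DivisibleBy.div x k)⟩))
  rw [← average_of_mem_fixedPoints hx, ← hx_div, map_nsmul, hk]

end AddAut

namespace ZpInfty

variable (p : ℕ) [Fact p.Prime]

noncomputable instance : DivisibleBy (ZpInfty p) ℕ :=
  letI : DivisibleBy ℚ_[p] ℕ := AddGroup.divisibleByNatOfDivisibleByInt _
  QuotientAddGroup.divisibleBy _

theorem exists_pow_nsmul_eq_zero (z : ZpInfty p) : ∃ n : ℕ, p ^ n • z = 0 := by
  induction z using QuotientAddGroup.induction_on with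
  | H q =>
    have hp : (1 : ℝ) < p := Nat.one_lt_cast.2 (Fact.out : p.Prime).one_lt
    obtain ⟨n, hn⟩ := pow_unbounded_of_one_lt ‖q‖ hp
    refine ⟨n, ?_⟩
    rw [← QuotientAddGroup.mk_nsmul, QuotientAddGroup.eq_zero_iff]
    refine ⟨⟨p ^ n • q, ?_⟩, rfl⟩
    rw [nsmul_eq_mul, norm_mul, Nat.cast_pow, norm_pow, Padic.norm_p, inv_pow, inv_mul_le_iff₀ (pow_pos (zero_lt_one.trans hp) n),
      mul_one]
    exact_mod_cast hn.le

end ZpInfty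

/-- Let `T` be the discrete `p`-torus of rank `r` and `G` a finite
group of automorphisms of `T`, with `ℓ = v_p(|G|)`.  Then either the fixed-point set
`C_T(G)` is infinite, or every element of `C_T(G)` is killed by `p^ℓ`. -/
theorem fixedPoints_infinite_or_bounded_exponent
    (p : ℕ) [Fact p.Prime] (r : ℕ)
    (G : AddSubgroup (AddAut (DiscretePTorus p r))) (hG : Finite G) :
    ({x : DiscretePTorus p r | ∀ α ∈ G, α x = x}).Infinite ∨
    ∀ x : DiscretePTorus p r, (∀ α ∈ G, α x = x) →
      p ^ ((Nat.card G).factorization p) • x = 0 := by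
  refine or_iff_not_imp_left.2 fun hC x hx => ?_
  have := Fintype.ofFinite G
  have : Finite (AddAut.fixedPoints G) := (Set.not_infinite.1 hC).to_subtype
  have hGx := AddAut.card_nsmul_eq_zero_of_mem_fixedPoints (AddAut.mem_fixedPoints.2 hx)
  funext i
  obtain ⟨n, hn⟩ := ZpInfty.exists_pow_nsmul_eq_zero p (x i)
  exact pow_factorization_nsmul_eq_zero Fact.out hn (congrFun hGx i) Nat.card_pos.ne'
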